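/- arXiv:1911.10878 — 2 statements merged into one kernel-verified Lean document; each statement's English description precedes it below -/
import Mathlib

section
/- For all T > 0, the quantity η(A) = (4e^{-2T} - (4AT+4)e^{-T} + A²T² + 4AT)e^{-2BT} + 4(e^{-T}-1)(AT - 2e^{-T})e^{-BT} + 4e^{-2T} - 4e^{-T} is nonnegative whenever A ≥ A_min := 2(1 - e^{-T} + √(1 - e^{-T}))(1 - e^{-BT})/(T e^{-BT}). -/
open Real

theorem eta_nonneg (B T : ℝ) (hB : 0 < B) (hT : 0 < T) (A : ℝ)
    (hA : A ≥ 2 * (1 - exp (-T) + Real.sqrt (1 - exp (-T))) * (1 - exp (-B*T)) /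
      (T * exp (-B*T))) :
    (4 * exp (-2*T) - (4*A*T + 4) * exp (-T) + A^2 * T^2 + 4*A*T) * exp (-2*B*T)
      + 4 * (exp (-T) - 1) * (A*T - 2 * exp (-T)) * exp (-B*T)
      + 4 * exp (-2*T) - 4 * exp (-T) ≥ 0 := by
  set x := exp (-T) with hx
  set y := exp (-B*T) with hy
  have hx1 : x < 1 := by
    rw [hx]; exact Real.exp_lt_one_iff.mpr (by linarith)
  have hy0 : 0 < y := Real.exp_pos _
  have hy1 : y < 1 := by
    rw [hy]; exact Real.exp_lt_one_iff.mpr (by nlinarith)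
  set s := Real.sqrt (1 - x) with hs
  have hs0 : 0 ≤ s := Real.sqrt_nonneg _
  have hs2 : s ^ 2 = 1 - x := Real.sq_sqrt (by linarith)
  have hx2 : exp (-2*T) = x ^ 2 := by
    rw [hx, sq, ← Real.exp_add]; congr 1; ring
  have hy2 : exp (-2*B*T) = y ^ 2 := by
    rw [hy, sq, ← Real.exp_add]; congr 1; ring
  have hTy : 0 < T * y := mul_pos hT hy0
  have hA' : 2 * (1 - x + s) * (1 - y) ≤ A * (T * y) := (div_le_iff₀ hTy).mp hA
  have key : (4 * exp (-2*T) - (4*A*T + 4) * x + A^2 * T^2 + 4*A*T) * exp (-2*B*T)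
      + 4 * (x - 1) * (A*T - 2 * x) * y
      + 4 * exp (-2*T) - 4 * x
      = (A*T*y - 2*(1-y)*(s^2+s)) * (A*T*y - 2*(1-y)*(s^2-s)) := by
    rw [hx2, hy2]
    linear_combination (4*y*(1-y)*(A*T) - 4*(1-y)^2*(1-2*x) - 4*(1-y)^2*(s^2-(1-x))) * hs2
  rw [key]
  have h1 : A*T*y - 2*(1-y)*(s^2+s) ≥ 0 := by nlinarith [hA']
  have h2 : A*T*y - 2*(1-y)*(s^2-s) ≥ 0 := by nlinarith [mul_nonneg (by linarith : (0:ℝ) ≤ 1 - y) hs0]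
  exact mul_nonneg h1 h2
end

section
/- Let B, T > 0 and A = A_min := 2(1-e^{-T}+√(1-e^{-T}))(1-e^{-BT})/(Te^{-BT}). Then the pair (ū⁰, w̄⁰) = (√(1-e^{-T}) e^{BT}, (e^{BT}-1)(1+2√(1-e^{-T}))/√(1-e^{-T})) satisfies the fixed point equations ū⁰ = ū⁰e^{-BT} + (ū⁰e^{-BT}/(1+ū⁰e^{-BT}))²(w̄⁰e^{-T} + TA) and w̄⁰ = (w̄⁰e^{-T} + TA)(1 - (ū⁰e^{-BT}/(1+ū⁰e^{-BT}))²). -/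
open Real

theorem equilibrium_at_Amin (B T : ℝ) (hB : 0 < B) (hT : 0 < T) :
    let A := 2 * (1 - exp (-T) + Real.sqrt (1 - exp (-T))) * (1 - exp (-B*T)) /
      (T * exp (-B*T))
    let u := Real.sqrt (1 - exp (-T)) * exp (B*T)
    let w := (exp (B*T) - 1) * (1 + 2 * Real.sqrt (1 - exp (-T))) /
      Real.sqrt (1 - exp (-T))
    u = u * exp (-B*T)
        + (u * exp (-B*T) / (1 + u * exp (-B*T)))^2 * (w * exp (-T) + T*A) ∧
    w = (w * exp (-T) + T*A)
        * (1 - (u * exp (-B*T) / (1 + u * exp (-B*T)))^2) := by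
  intro A u w
  have hTexp : exp (-T) < 1 := by
    rw [exp_lt_one_iff]; linarith
  have hspos : 0 < Real.sqrt (1 - exp (-T)) := Real.sqrt_pos.mpr (by linarith)
  set s := Real.sqrt (1 - exp (-T)) with hs
  have hs2 : s ^ 2 = 1 - exp (-T) := Real.sq_sqrt (by linarith)
  have hE : exp (-(B*T)) * exp (B*T) = 1 := by
    rw [← Real.exp_add]; simp
  have hE' : exp (-(B*T)) = exp (-B*T) := by ring_nf
  have hEpos : 0 < exp (-B*T) := Real.exp_pos _
  have hEpos' : 0 < exp (B*T) := Real.exp_pos _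
  have huF : u * exp (-B*T) = s := by
    simp only [u]
    rw [mul_assoc, ← hE', mul_comm (exp (B*T)), hE, mul_one]
  have hexpT : exp (-T) = 1 - s ^ 2 := by linarith
  have hTA : T * A = 2 * s * (1 + s) * (exp (B*T) - 1) := by
    have h : exp (-B*T) * exp (B*T) = 1 := by rw [← hE']; exact hE
    simp only [A, ← hs]
    field_simp
    linear_combination (-(1 - exp (-(T*B))))*hexpT - s*(1+s)*(by rw [mul_comm T B]; exact hE : exp (-(T*B)) * exp (T*B) = 1)
  have hsum : w * exp (-T) + T * A = (exp (B*T) - 1) * (1 + s)^2 / s := by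
    simp only [w, ← hs]
    rw [hTA, hexpT]
    field_simp
    ring
  constructor
  · rw [huF, hsum]
    have h1s : (0:ℝ) < 1 + s := by linarith
    field_simp
    ring
  · rw [huF, hsum]
    simp only [w, ← hs]
    have h1s : (0:ℝ) < 1 + s := by linarith
    field_simp
    ring
end
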